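/- arXiv:2509.21513 — 2 statements merged into one kernel-verified Lean document; each statement's English description precedes it below -/
import Mathlib

section
/- (Pathwise Grönwall perturbation bound.) Let u, v : [0,1] × ℝ^d → ℝ^d be time-dependent vector fields and L : [0,1] → [0,∞) an integrable function such that, for almost every t, x ↦ u(t,x) is L(t)-Lipschitz. Fix 0 ≤ s ≤ τ ≤ 1 and a point X ∈ ℝ^d, and let φ, ψ : [s,τ] → ℝ^d be absolutely continuous curves with φ(s) = ψ(s) = X solving φ'(t) = u(t, φ(t)) and ψ'(t) = v(t, ψ(t)) for almost every t. Define δ(t) := ‖u(t, ψ(t)) − v(t, ψ(t))‖. Then ‖φ(τ) − ψ(τ)‖ ≤ ∫_s^τ exp(∫_t^τ L(r) dr) · δ(t) dt. -/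
open MeasureTheory intervalIntegral Set

/-!
The difference `g t = ‖φ t - ψ t‖` satisfies `g t ≤ ∫ s..t, (L g + δ)`: subtract the two
integral equations and split `u(φ) - v(ψ) = (u(φ) - u(ψ)) + (u(ψ) - v(ψ))`. For the integral
Grönwall inequality, with `W` the primitive of `L`, the primitive `A` of `L g + δ` is absolutely
continuous and `(e^{-W} A)' = e^{-W} (L (g - A) + δ) ≤ e^{-W} δ` almost everywhere because
`L ≥ 0` and `g ≤ A`; the fundamental theorem of calculus for absolutely continuous functions
then gives `g τ ≤ A τ ≤ ∫ s..τ, e^{W τ - W t} δ t`.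
-/

theorem LipschitzOnWith.comp_absolutelyContinuousOnInterval {X Y : Type*} [PseudoMetricSpace X]
    [PseudoMetricSpace Y] {h : X → Y} {K : NNReal} {s : Set X} (hh : LipschitzOnWith K h s)
    {f : ℝ → X} {a b : ℝ} (hf : AbsolutelyContinuousOnInterval f a b)
    (hfs : MapsTo f (uIcc a b) s) : AbsolutelyContinuousOnInterval (h ∘ f) a b := by
  rw [absolutelyContinuousOnInterval_iff] at hf ⊢
  intro ε hε
  obtain ⟨δ, hδ, hfδ⟩ := hf (ε / (K + 1)) (by positivity)
  refine ⟨δ, hδ, fun E hE hEδ => ?_⟩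
  calc ∑ i ∈ Finset.range E.1, dist (h (f (E.2 i).1)) (h (f (E.2 i).2))
      ≤ ∑ i ∈ Finset.range E.1, K * dist (f (E.2 i).1) (f (E.2 i).2) :=
        Finset.sum_le_sum fun i hi =>
          hh.dist_le_mul _ (hfs (hE.1 i hi).1) _ (hfs (hE.1 i hi).2)
    _ = K * ∑ i ∈ Finset.range E.1, dist (f (E.2 i).1) (f (E.2 i).2) := by
        rw [Finset.mul_sum]
    _ ≤ K * (ε / (K + 1)) := by gcongr; exact (hfδ E hE hEδ).le
    _ < (K + 1) * (ε / (K + 1)) := by gcongr; linarith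
    _ = ε := by field_simp

theorem AbsolutelyContinuousOnInterval.exp {f : ℝ → ℝ} {a b : ℝ}
    (hf : AbsolutelyContinuousOnInterval f a b) :
    AbsolutelyContinuousOnInterval (fun x => Real.exp (f x)) a b := by
  obtain ⟨C, hC⟩ := hf.exists_bound
  obtain ⟨K, hK⟩ := Real.contDiff_exp.contDiffOn.exists_lipschitzOnWith (n := 1) (s := Icc (-C) C)
    (by decide) (convex_Icc _ _) isCompact_Icc
  exact hK.comp_absolutelyContinuousOnInterval hf fun x hx => abs_le.mp (hC x hx)

theorem le_integral_exp_integral_mul_of_le_integral {a b : ℝ} (hab : a ≤ b) {L δ g : ℝ → ℝ}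
    (hL : IntervalIntegrable L volume a b) (hL0 : ∀ r ∈ Icc a b, 0 ≤ L r)
    (hLg : IntervalIntegrable (fun r => L r * g r) volume a b)
    (hδ : IntervalIntegrable δ volume a b)
    (hg : ∀ t ∈ Icc a b, g t ≤ ∫ r in a..t, (L r * g r + δ r)) :
    g b ≤ ∫ t in a..b, Real.exp (∫ r in t..b, L r) * δ t := by
  set W : ℝ → ℝ := fun t => ∫ r in a..t, L r
  set A : ℝ → ℝ := fun t => ∫ r in a..t, (L r * g r + δ r)
  have hA : AbsolutelyContinuousOnInterval A a b :=
    (hLg.add hδ).absolutelyContinuousOnInterval_intervalIntegral left_mem_uIcc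
  have hE : AbsolutelyContinuousOnInterval (fun t => Real.exp (-W t)) a b :=
    (hL.absolutelyContinuousOnInterval_intervalIntegral left_mem_uIcc).neg.exp
  have hderiv : ∀ᵐ x ∂(volume.restrict (Icc a b)),
      deriv (fun t => Real.exp (-W t) * A t) x ≤ Real.exp (-W x) * δ x := by
    rw [← uIcc_of_le hab, ae_restrict_iff' measurableSet_uIcc]
    filter_upwards [hL.ae_hasDerivAt_integral, (hLg.add hδ).ae_hasDerivAt_integral]
      with x hWx hAx hx
    have hEA : HasDerivAt (fun t => Real.exp (-W t) * A t)
        (Real.exp (-W x) * -L x * A x + Real.exp (-W x) * (L x * g x + δ x)) x :=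
      ((hWx hx a left_mem_uIcc).neg.exp).mul (hAx hx a left_mem_uIcc)
    rw [uIcc_of_le hab] at hx
    rw [hEA.deriv]
    have hgA : g x ≤ A x := hg x hx
    have hE0 := Real.exp_pos (-W x)
    nlinarith [mul_nonneg (mul_nonneg hE0.le (hL0 x hx)) (sub_nonneg.2 hgA)]
  have hEA_le : Real.exp (-W b) * A b ≤ ∫ t in a..b, Real.exp (-W t) * δ t := by
    have hFTC := (hE.fun_mul hA).integral_deriv_eq_sub
    simp only [A, integral_same, mul_zero, sub_zero] at hFTC
    rw [← hFTC]
    exact integral_mono_ae_restrict hab (hE.fun_mul hA).intervalIntegrable_deriv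
      (hδ.continuousOn_mul hE.continuousOn) hderiv
  have hW_sub : ∀ t ∈ uIcc a b, ∫ r in t..b, L r = W b - W t := fun t ht =>
    (integral_interval_sub_left hL (hL.mono_set (uIcc_subset_uIcc_left ht))).symm
  calc g b ≤ A b := hg b (right_mem_Icc.2 hab)
    _ = Real.exp (W b) * (Real.exp (-W b) * A b) := by
        rw [← mul_assoc, ← Real.exp_add, add_neg_cancel, Real.exp_zero, one_mul]
    _ ≤ Real.exp (W b) * ∫ t in a..b, Real.exp (-W t) * δ t := by gcongr
    _ = ∫ t in a..b, Real.exp (∫ r in t..b, L r) * δ t := by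
        rw [← intervalIntegral.integral_const_mul]
        refine integral_congr fun t ht => ?_
        rw [hW_sub t ht, sub_eq_add_neg, Real.exp_add, mul_assoc]

section IntegralEquation

variable {E : Type*} [NormedAddCommGroup E] [NormedSpace ℝ E] {a b : ℝ} {X : E}

theorem continuousOn_of_eq_add_integral {φ f : ℝ → E} (hab : a ≤ b)
    (hf : IntervalIntegrable f volume a b) (hφ : ∀ t ∈ Icc a b, φ t = X + ∫ r in a..t, f r) :
    ContinuousOn φ (Icc a b) := by
  have hprim := continuousOn_primitive_interval' hf left_mem_uIcc
  rw [uIcc_of_le hab] at hprim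
  exact (continuousOn_const.add hprim).congr hφ

theorem norm_sub_le_integral_of_eq_add_integral {u v : ℝ → E → E} {L : ℝ → ℝ} {φ ψ : ℝ → E}
    (hLip : ∀ᵐ t ∂(volume.restrict (Icc a b)), ∀ x y, ‖u t x - u t y‖ ≤ L t * ‖x - y‖)
    (hφint : IntervalIntegrable (fun t => u t (φ t)) volume a b)
    (hψint : IntervalIntegrable (fun t => v t (ψ t)) volume a b)
    (hφ : ∀ t ∈ Icc a b, φ t = X + ∫ r in a..t, u r (φ r))
    (hψ : ∀ t ∈ Icc a b, ψ t = X + ∫ r in a..t, v r (ψ r))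
    (hLg : IntervalIntegrable (fun t => L t * ‖φ t - ψ t‖) volume a b)
    (hδ : IntervalIntegrable (fun t => ‖u t (ψ t) - v t (ψ t)‖) volume a b) :
    ∀ t ∈ Icc a b,
      ‖φ t - ψ t‖ ≤ ∫ r in a..t, (L r * ‖φ r - ψ r‖ + ‖u r (ψ r) - v r (ψ r)‖) := by
  intro t ht
  have hsub : uIcc a t ⊆ uIcc a b := uIcc_subset_uIcc_left (Icc_subset_uIcc ht)
  have hφt := hφint.mono_set hsub
  have hψt := hψint.mono_set hsub
  have hdiff : φ t - ψ t = ∫ r in a..t, (u r (φ r) - v r (ψ r)) := by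
    rw [hφ t ht, hψ t ht, integral_sub hφt hψt, add_sub_add_left_eq_sub]
  rw [hdiff]
  refine (intervalIntegral.norm_integral_le_integral_norm ht.1).trans <|
    integral_mono_ae_restrict ht.1 (hφt.sub hψt).norm ((hLg.add hδ).mono_set hsub) ?_
  filter_upwards [ae_restrict_of_ae_restrict_of_subset (Icc_subset_Icc_right ht.2) hLip]
    with r hr
  calc ‖u r (φ r) - v r (ψ r)‖
      ≤ ‖u r (φ r) - u r (ψ r)‖ + ‖u r (ψ r) - v r (ψ r)‖ :=
        norm_sub_le_norm_sub_add_norm_sub _ _ _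
    _ ≤ L r * ‖φ r - ψ r‖ + ‖u r (ψ r) - v r (ψ r)‖ := by gcongr; exact hr _ _

end IntegralEquation

theorem pathwise_gronwall_perturbation_general {d : ℕ}
    (u v : ℝ → EuclideanSpace ℝ (Fin d) → EuclideanSpace ℝ (Fin d))
    (L : ℝ → ℝ)
    (hL0 : ∀ r ∈ Set.Icc (0 : ℝ) 1, 0 ≤ L r)
    (hLint : IntegrableOn L (Set.Icc (0 : ℝ) 1))
    (hLip : ∀ᵐ t ∂(volume.restrict (Set.Icc (0 : ℝ) 1)),
      ∀ x y, ‖u t x - u t y‖ ≤ L t * ‖x - y‖)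
    (s τ : ℝ) (hs : 0 ≤ s) (hsτ : s ≤ τ) (hτ : τ ≤ 1)
    (X : EuclideanSpace ℝ (Fin d))
    (φ ψ : ℝ → EuclideanSpace ℝ (Fin d))
    (hφint : IntervalIntegrable (fun t => u t (φ t)) volume s τ)
    (hψint : IntervalIntegrable (fun t => v t (ψ t)) volume s τ)
    (hφ : ∀ t ∈ Set.Icc s τ, φ t = X + ∫ r in s..t, u r (φ r))
    (hψ : ∀ t ∈ Set.Icc s τ, ψ t = X + ∫ r in s..t, v r (ψ r))
    (hδint : IntervalIntegrable (fun t => ‖u t (ψ t) - v t (ψ t)‖) volume s τ) :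
    ‖φ τ - ψ τ‖ ≤
      ∫ t in s..τ, Real.exp (∫ r in t..τ, L r) * ‖u t (ψ t) - v t (ψ t)‖ := by
  have hsub : Icc s τ ⊆ Icc 0 1 := Icc_subset_Icc hs hτ
  have hL : IntervalIntegrable L volume s τ :=
    (intervalIntegrable_iff_integrableOn_Icc_of_le hsτ).2 (hLint.mono_set hsub)
  have hdist : ContinuousOn (fun t => ‖φ t - ψ t‖) (uIcc s τ) := by
    rw [uIcc_of_le hsτ]
    exact ((continuousOn_of_eq_add_integral hsτ hφint hφ).sub
      (continuousOn_of_eq_add_integral hsτ hψint hψ)).norm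
  have hLdist := hL.mul_continuousOn hdist
  exact le_integral_exp_integral_mul_of_le_integral hsτ hL (fun r hr => hL0 r (hsub hr))
    hLdist hδint <| norm_sub_le_integral_of_eq_add_integral
      (ae_restrict_of_ae_restrict_of_subset hsub hLip) hφint hψint hφ hψ hLdist hδint

/-- **Pathwise Grönwall perturbation bound.**
Let `u, v` be time-dependent vector fields with `x ↦ u(t,x)` `L(t)`-Lipschitz for a.e.
`t ∈ [0,1]` and `L` integrable.  If `φ, ψ` are absolutely continuous curves on `[s,τ]`
started at the same point `X`, solving `φ' = u(t,φ)` and `ψ' = v(t,ψ)` a.e. (encoded via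
the integral equations), and `δ(t) := ‖u(t,ψ(t)) − v(t,ψ(t))‖`, then
`‖φ(τ) − ψ(τ)‖ ≤ ∫_s^τ exp(∫_t^τ L(r) dr) δ(t) dt`. -/
theorem pathwise_gronwall_perturbation {d : ℕ}
    (u v : ℝ → EuclideanSpace ℝ (Fin d) → EuclideanSpace ℝ (Fin d))
    (L : ℝ → ℝ)
    (hL0 : ∀ r ∈ Set.Icc (0 : ℝ) 1, 0 ≤ L r)
    (hLint : IntegrableOn L (Set.Icc (0 : ℝ) 1))
    (hLip : ∀ᵐ t ∂(volume.restrict (Set.Icc (0 : ℝ) 1)),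
      ∀ x y, ‖u t x - u t y‖ ≤ L t * ‖x - y‖)
    (s τ : ℝ) (hs : 0 ≤ s) (hsτ : s ≤ τ) (hτ : τ ≤ 1)
    (X : EuclideanSpace ℝ (Fin d))
    (φ ψ : ℝ → EuclideanSpace ℝ (Fin d))
    (hφs : φ s = X) (hψs : ψ s = X)
    (hφint : IntervalIntegrable (fun t => u t (φ t)) volume s τ)
    (hψint : IntervalIntegrable (fun t => v t (ψ t)) volume s τ)
    (hφ : ∀ t ∈ Set.Icc s τ, φ t = X + ∫ r in s..t, u r (φ r))
    (hψ : ∀ t ∈ Set.Icc s τ, ψ t = X + ∫ r in s..t, v r (ψ r))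
    (hδint : IntervalIntegrable (fun t => ‖u t (ψ t) - v t (ψ t)‖) volume s τ) :
    ‖φ τ - ψ τ‖ ≤
      ∫ t in s..τ, Real.exp (∫ r in t..τ, L r) * ‖u t (ψ t) - v t (ψ t)‖ :=
  pathwise_gronwall_perturbation_general u v L hL0 hLint hLip s τ hs hsτ hτ X φ ψ hφint hψint hφ hψ
    hδint
end

section
/- Let Φ, Ψ : ℝ^d → ℝ^d be measurable maps with Φ Lipschitz of constant Lip(Φ), and let μ, ν be Borel probability measures on ℝ^d with finite second moment such that ∫ ‖Φ(x)‖² dν(x) < ∞ and ∫ ‖Ψ(x)‖² dν(x) < ∞. Then W₂(Φ_#μ, Ψ_#ν) ≤ Lip(Φ) · W₂(μ, ν) + (∫ ‖Φ(X) − Ψ(X)‖² dν(X))^{1/2}. -/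
open MeasureTheory ENNReal NNReal

/-- The quadratic Wasserstein distance, defined as the infimum over couplings of the
square root of the transport cost `∫ ‖x − y‖² dπ`. -/
noncomputable def W2 {E : Type*} [MeasurableSpace E] [NormedAddCommGroup E]
    (μ ν : Measure E) : ℝ≥0∞ :=
  ⨅ (π : Measure (E × E)) (_ : π.map Prod.fst = μ) (_ : π.map Prod.snd = ν),
    (∫⁻ p, (‖p.1 - p.2‖₊ : ℝ≥0∞) ^ 2 ∂π) ^ (1 / 2 : ℝ)

/-!
Push a coupling `π` of `μ` and `ν` forward by `Φ × Ψ`; this couples `Φ_#μ` and `Ψ_#ν`. Writing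
`Φ x - Ψ y = (Φ x - Φ y) + (Φ y - Ψ y)`, Minkowski's inequality in `L²(π)` bounds its cost by
`K ‖x - y‖_{L²(π)} + ‖Φ - Ψ‖_{L²(ν)}`, since `ν` is the second marginal of `π`. Taking the
infimum over `π` gives the claim.
-/

lemma eLpNorm_two_eq_rpow_lintegral_nnnorm_sq {α F : Type*} [MeasurableSpace α]
    [NormedAddCommGroup F] (f : α → F) (μ : Measure α) :
    eLpNorm f 2 μ = (∫⁻ x, (‖f x‖₊ : ℝ≥0∞) ^ 2 ∂μ) ^ (1 / 2 : ℝ) := by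
  simpa [enorm_eq_nnnorm] using eLpNorm_nnreal_eq_lintegral (f := f) (μ := μ) (p := 2) two_ne_zero

lemma ENNReal.le_coe_mul_biInf_add {ι : Type*} {s : Set ι} (hs : s.Nonempty) {f : ι → ℝ≥0∞}
    {a c : ℝ≥0∞} (K : ℝ≥0) (h : ∀ i ∈ s, a ≤ K * f i + c) : a ≤ K * (⨅ i ∈ s, f i) + c := by
  have : Nonempty s := hs.to_subtype
  rw [iInf_subtype', ENNReal.mul_iInf fun hK => absurd hK coe_ne_top,
    ENNReal.iInf_add]
  exact le_iInf fun i => h i i.2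

def couplings {α β : Type*} [MeasurableSpace α] [MeasurableSpace β] (μ : Measure α)
    (ν : Measure β) : Set (Measure (α × β)) :=
  {π | π.map Prod.fst = μ ∧ π.map Prod.snd = ν}

section couplings

variable {α β γ δ : Type*} [MeasurableSpace α] [MeasurableSpace β] [MeasurableSpace γ]
  [MeasurableSpace δ] {μ : Measure α} {ν : Measure β} {π : Measure (α × β)}

lemma prod_mem_couplings [IsProbabilityMeasure μ] [IsProbabilityMeasure ν] :
    μ.prod ν ∈ couplings μ ν := by
  simp [couplings]

lemma map_prodMap_mem_couplings (hπ : π ∈ couplings μ ν) {f : α → γ} {g : β → δ}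
    (hf : Measurable f) (hg : Measurable g) :
    π.map (Prod.map f g) ∈ couplings (μ.map f) (ν.map g) := by
  obtain ⟨hπ₁, hπ₂⟩ := hπ
  constructor
  · rw [Measure.map_map measurable_fst (hf.prodMap hg), ← hπ₁, Measure.map_map hf measurable_fst]
    rfl
  · rw [Measure.map_map measurable_snd (hf.prodMap hg), ← hπ₂, Measure.map_map hg measurable_snd]
    rfl

end couplings

section W2

variable {E : Type*} [NormedAddCommGroup E] [MeasurableSpace E]

lemma W2_eq_biInf_couplings (μ ν : Measure E) :
    W2 μ ν = ⨅ π ∈ couplings μ ν, eLpNorm (fun p : E × E => p.1 - p.2) 2 π := by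
  simp only [W2, couplings, Set.mem_ofPred_eq, iInf_and, eLpNorm_two_eq_rpow_lintegral_nnnorm_sq]

lemma W2_le_eLpNorm_of_mem_couplings {μ ν : Measure E} {π : Measure (E × E)}
    (hπ : π ∈ couplings μ ν) : W2 μ ν ≤ eLpNorm (fun p : E × E => p.1 - p.2) 2 π := by
  rw [W2_eq_biInf_couplings]
  exact biInf_le _ hπ

lemma le_mul_W2_add_of_forall_couplings {μ ν : Measure E} [IsProbabilityMeasure μ]
    [IsProbabilityMeasure ν] {a c : ℝ≥0∞} (K : ℝ≥0)
    (h : ∀ π ∈ couplings μ ν, a ≤ K * eLpNorm (fun p : E × E => p.1 - p.2) 2 π + c) :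
    a ≤ K * W2 μ ν + c := by
  rw [W2_eq_biInf_couplings]
  exact ENNReal.le_coe_mul_biInf_add ⟨_, prod_mem_couplings⟩ K h

end W2

section Lipschitz

variable {E F : Type*} [NormedAddCommGroup E] [MeasurableSpace E] [OpensMeasurableSpace E]
  [NormedAddCommGroup F] [MeasurableSpace F] [BorelSpace F] [SecondCountableTopology F]

lemma eLpNorm_sub_map_prodMap {α β : Type*} [MeasurableSpace α] [MeasurableSpace β]
    {π : Measure (α × β)} {f : α → F} {g : β → F} (hf : Measurable f) (hg : Measurable g)
    (p : ℝ≥0∞) :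
    eLpNorm (fun q : F × F => q.1 - q.2) p (π.map (Prod.map f g)) =
      eLpNorm (fun q : α × β => f q.1 - g q.2) p π :=
  eLpNorm_map_measure (continuous_fst.sub continuous_snd).aestronglyMeasurable
    (hf.prodMap hg).aemeasurable

lemma eLpNorm_comp_fst_sub_comp_snd_le {Φ Ψ : E → F} {K : ℝ≥0} (hΦ : LipschitzWith K Φ)
    (hΨ : Measurable Ψ) (π : Measure (E × E)) {p : ℝ≥0∞} (hp : 1 ≤ p) :
    eLpNorm (fun q : E × E => Φ q.1 - Ψ q.2) p π ≤
      K * eLpNorm (fun q : E × E => q.1 - q.2) p π +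
        eLpNorm (fun x => Φ x - Ψ x) p (π.map Prod.snd) := by
  have hΦm : Measurable Φ := hΦ.continuous.measurable
  have hsplit : (fun q : E × E => Φ q.1 - Ψ q.2) =
      (fun q => Φ q.1 - Φ q.2) + (fun q => Φ q.2 - Ψ q.2) := by
    funext q
    exact (sub_add_sub_cancel _ _ _).symm
  have hlip : eLpNorm (fun q : E × E => Φ q.1 - Φ q.2) p π ≤
      K * eLpNorm (fun q : E × E => q.1 - q.2) p π :=
    eLpNorm_le_mul_eLpNorm_of_ae_le_mul' (ae_of_all _ fun q => by
      simpa only [edist_eq_enorm_sub] using hΦ.edist_le_mul q.1 q.2) p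
  have hsnd : eLpNorm (fun q : E × E => Φ q.2 - Ψ q.2) p π =
      eLpNorm (fun x => Φ x - Ψ x) p (π.map Prod.snd) :=
    (eLpNorm_map_measure (hΦm.sub hΨ).aestronglyMeasurable measurable_snd.aemeasurable).symm
  calc eLpNorm (fun q : E × E => Φ q.1 - Ψ q.2) p π
      ≤ eLpNorm (fun q : E × E => Φ q.1 - Φ q.2) p π +
          eLpNorm (fun q : E × E => Φ q.2 - Ψ q.2) p π := by
        rw [hsplit]
        exact eLpNorm_add_le
          ((hΦm.comp measurable_fst).sub (hΦm.comp measurable_snd)).aestronglyMeasurable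
          ((hΦm.comp measurable_snd).sub (hΨ.comp measurable_snd)).aestronglyMeasurable hp
    _ ≤ _ := add_le_add hlip hsnd.le

end Lipschitz

theorem W2_map_le_lipschitz_add_L2_general {d : ℕ} (K : ℝ≥0)
    (Φ Ψ : EuclideanSpace ℝ (Fin d) → EuclideanSpace ℝ (Fin d))
    (hΦ : LipschitzWith K Φ) (hΨ : Measurable Ψ)
    (μ ν : Measure (EuclideanSpace ℝ (Fin d)))
    [IsProbabilityMeasure μ] [IsProbabilityMeasure ν] :
    W2 (μ.map Φ) (ν.map Ψ) ≤
      (K : ℝ≥0∞) * W2 μ ν + (∫⁻ x, (‖Φ x - Ψ x‖₊ : ℝ≥0∞) ^ 2 ∂ν) ^ (1 / 2 : ℝ) := by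
  have hΦm : Measurable Φ := hΦ.continuous.measurable
  rw [← eLpNorm_two_eq_rpow_lintegral_nnnorm_sq]
  refine le_mul_W2_add_of_forall_couplings K fun π hπ => ?_
  calc W2 (μ.map Φ) (ν.map Ψ)
      ≤ eLpNorm (fun q => q.1 - q.2) 2 (π.map (Prod.map Φ Ψ)) :=
        W2_le_eLpNorm_of_mem_couplings (map_prodMap_mem_couplings hπ hΦm hΨ)
    _ = eLpNorm (fun q => Φ q.1 - Ψ q.2) 2 π := eLpNorm_sub_map_prodMap hΦm hΨ 2
    _ ≤ K * eLpNorm (fun q => q.1 - q.2) 2 π +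
          eLpNorm (fun x => Φ x - Ψ x) 2 (π.map Prod.snd) :=
        eLpNorm_comp_fst_sub_comp_snd_le hΦ hΨ π one_le_two
    _ = K * eLpNorm (fun q => q.1 - q.2) 2 π + eLpNorm (fun x => Φ x - Ψ x) 2 ν := by
        rw [hπ.2]

/-- **Combined contraction-plus-coupling bound.**
For a `K`-Lipschitz map `Φ` and a measurable map `Ψ`, both square integrable with respect
to `ν`, and Borel probability measures `μ, ν` with finite second moment,
`W₂(Φ_#μ, Ψ_#ν) ≤ K ⬝ W₂(μ, ν) + (∫ ‖Φ(X) − Ψ(X)‖² dν(X))^{1/2}`. -/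
theorem W2_map_le_lipschitz_add_L2 {d : ℕ} (K : ℝ≥0)
    (Φ Ψ : EuclideanSpace ℝ (Fin d) → EuclideanSpace ℝ (Fin d))
    (hΦ : LipschitzWith K Φ) (hΨ : Measurable Ψ)
    (μ ν : Measure (EuclideanSpace ℝ (Fin d)))
    [IsProbabilityMeasure μ] [IsProbabilityMeasure ν]
    (hμ2 : ∫⁻ x, (‖x‖₊ : ℝ≥0∞) ^ 2 ∂μ < ⊤)
    (hν2 : ∫⁻ x, (‖x‖₊ : ℝ≥0∞) ^ 2 ∂ν < ⊤)
    (hΦ2 : ∫⁻ x, (‖Φ x‖₊ : ℝ≥0∞) ^ 2 ∂ν < ⊤)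
    (hΨ2 : ∫⁻ x, (‖Ψ x‖₊ : ℝ≥0∞) ^ 2 ∂ν < ⊤) :
    W2 (μ.map Φ) (ν.map Ψ) ≤
      (K : ℝ≥0∞) * W2 μ ν + (∫⁻ x, (‖Φ x - Ψ x‖₊ : ℝ≥0∞) ^ 2 ∂ν) ^ (1 / 2 : ℝ) :=
  W2_map_le_lipschitz_add_L2_general K Φ Ψ hΦ hΨ μ ν
end
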